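/- Let c be a phase matrix and ε ∈ (0,1]. Then there exists a unique bounded operator C_ε on ℓ²(ℕ,ℂ) with ⟨e_n, C_ε e_m⟩ = c(n,m)·(1−ε)^{|n−m|} for all n, m ∈ ℕ, and its operator norm satisfies ‖C_ε‖ ≤ 2/ε − 1. -/

import Mathlib

open scoped ComplexConjugate ComplexOrder

noncomputable section

abbrev H : Type := lp (fun _ : ℕ => ℂ) 2

def e (n : ℕ) : H := lp.single 2 n (1 : ℂ)

def IsPosSemidef (c : ℕ × ℕ → ℂ) : Prop :=
  ∀ f : ℕ →₀ ℂ, 0 ≤ ∑ n ∈ f.support, ∑ m ∈ f.support, conj (f n) * c (n, m) * f m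

def IsPhaseMatrix (c : ℕ × ℕ → ℂ) : Prop :=
  (∀ n, c (n, n) = 1) ∧ IsPosSemidef c

lemma psd_sum_subset {c : ℕ × ℕ → ℂ} (hc : IsPosSemidef c) (f : ℕ →₀ ℂ) (s : Finset ℕ)
    (hs : f.support ⊆ s) :
    0 ≤ ∑ n ∈ s, ∑ m ∈ s, conj (f n) * c (n, m) * f m := by
  have h1 : ∑ n ∈ s, ∑ m ∈ s, conj (f n) * c (n, m) * f m
      = ∑ n ∈ f.support, ∑ m ∈ f.support, conj (f n) * c (n, m) * f m := by
    rw [← Finset.sum_subset hs (fun n _ hn => by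
      simp [Finsupp.notMem_support_iff.mp hn])]
    refine Finset.sum_congr rfl fun n _ => ?_
    rw [← Finset.sum_subset hs (fun m _ hm => by
      simp [Finsupp.notMem_support_iff.mp hm])]
  rw [h1]; exact hc f

lemma key_ineq {c : ℕ × ℕ → ℂ} (hc : IsPhaseMatrix c) {n m : ℕ} (h : n ≠ m) (a b : ℂ) :
    0 ≤ conj a * a + conj b * b + conj a * c (n, m) * b + conj b * c (m, n) * a := by
  have hps := psd_sum_subset hc.2 (Finsupp.single n a + Finsupp.single m b) {n, m}
    (Finsupp.support_add.trans (by
      apply Finset.union_subset <;>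
        · intro x hx
          simp only [Finsupp.mem_support_iff, ne_eq] at hx
          rcases Finsupp.single_apply_ne_zero.mp hx with ⟨rfl, -⟩ <;> simp))
  rw [Finset.sum_pair h] at hps
  rw [Finset.sum_pair h, Finset.sum_pair h] at hps
  simp only [Finsupp.add_apply, Finsupp.single_apply, if_pos rfl, if_neg h, if_neg (Ne.symm h)] at hps
  simp only [if_true, add_zero, zero_add] at hps
  rw [hc.1 n, hc.1 m] at hps
  convert hps using 1
  ring

lemma herm {c : ℕ × ℕ → ℂ} (hc : IsPhaseMatrix c) (n m : ℕ) : c (m, n) = conj (c (n, m)) := by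
  rcases eq_or_ne n m with rfl | h
  · rw [hc.1 n]; simp
  · have h1 := key_ineq hc h 1 1
    have h2 := key_ineq hc h 1 Complex.I
    simp only [map_one, one_mul, mul_one, Complex.conj_I] at h1 h2
    rw [Complex.nonneg_iff] at h1 h2
    have e1 := h1.2
    have e2 := h2.2
    apply Complex.ext
    · simp only [Complex.add_im, Complex.one_im, Complex.mul_im, Complex.I_re, Complex.I_im,
        Complex.neg_re, Complex.neg_im, Complex.one_re] at e1 e2 ⊢
      simp only [Complex.conj_re]
      nlinarith [e1, e2]
    · simp only [Complex.add_im, Complex.one_im, Complex.mul_im, Complex.I_re, Complex.I_im,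
        Complex.neg_re, Complex.neg_im, Complex.one_re] at e1 e2 ⊢
      simp only [Complex.conj_im]
      nlinarith [e1, e2]

lemma abs_le_one {c : ℕ × ℕ → ℂ} (hc : IsPhaseMatrix c) (n m : ℕ) : ‖c (n, m)‖ ≤ 1 := by
  rcases eq_or_ne n m with rfl | h
  · rw [hc.1 n]; simp
  · rcases eq_or_ne (c (n, m)) 0 with hz | hz
    · rw [hz]; simp
    · set z := c (n, m) with hzdef
      have hkey := key_ineq hc h (‖z‖ : ℂ) (-(conj z))
      rw [herm hc n m, ← hzdef] at hkey
      have hcalc : conj (‖z‖ : ℂ) * (‖z‖ : ℂ) + conj (-(conj z)) * (-(conj z))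
          + conj (‖z‖ : ℂ) * z * (-(conj z)) + conj (-(conj z)) * conj z * (‖z‖ : ℂ)
          = 2 * (‖z‖ : ℂ) ^ 2 - 2 * (‖z‖ : ℂ) ^ 3 := by
        simp only [map_neg, Complex.conj_conj, Complex.conj_ofReal]
        linear_combination (1 - 2 * (‖z‖ : ℂ)) * Complex.mul_conj' z
      rw [hcalc, Complex.nonneg_iff] at hkey
      have hre := hkey.1
      have hre' : (0:ℝ) ≤ 2 * ‖z‖ ^ 2 - 2 * ‖z‖ ^ 3 := by
        have : ((2 * (‖z‖ : ℂ) ^ 2 - 2 * (‖z‖ : ℂ) ^ 3)).re = 2 * ‖z‖ ^ 2 - 2 * ‖z‖ ^ 3 := by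
          simp [← Complex.ofReal_pow, ← Complex.ofReal_mul, ← Complex.ofReal_sub]
        rwa [this] at hre
      have hzpos : 0 < ‖z‖ := norm_pos_iff.mpr hz
      by_contra hgt
      push_neg at hgt
      have hx : 0 < ‖z‖ ^ 2 * (‖z‖ - 1) := mul_pos (pow_pos hzpos 2) (by linarith)
      nlinarith [hre', hx]

section Diag

variable (w : ℕ → ℂ) (σ : ℕ → ℕ)

lemma two_toReal : ((2 : ENNReal).toReal) = 2 := by norm_num

lemma diag_est (hw : ∀ n, ‖w n‖ ≤ 1)
    (hinj : ∀ n m, w n ≠ 0 → w m ≠ 0 → σ n = σ m → n = m) (f : H) :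
    Summable (fun n => ‖w n * f (σ n)‖ ^ (2:ℝ)) ∧
      ∑' n, ‖w n * f (σ n)‖ ^ (2:ℝ) ≤ ∑' n, ‖f n‖ ^ (2:ℝ) := by
  have base : Summable fun i => ‖f i‖ ^ (2:ℝ) := by
    have := (lp.memℓp f).summable (p := 2) (by norm_num)
    simpa [two_toReal] using this
  set S : Set ℕ := {n | w n ≠ 0} with hS
  set h : ℕ → ℝ := fun n => ‖f (σ n)‖ ^ (2:ℝ) with hh
  have hinjS : Function.Injective (fun x : S => σ (x : ℕ)) := by
    rintro ⟨x, hx⟩ ⟨y, hy⟩ hxy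
    exact Subtype.ext (hinj x y hx hy hxy)
  have hcomp : Summable ((fun m => ‖f m‖ ^ (2:ℝ)) ∘ fun x : S => σ (x : ℕ)) :=
    base.comp_injective hinjS
  have hsubty : Summable (fun x : S => h (x : ℕ)) := hcomp
  have hindic : Summable (S.indicator h) := summable_subtype_iff_indicator.mp hsubty
  have hle : ∀ n, ‖w n * f (σ n)‖ ^ (2:ℝ) ≤ S.indicator h n := by
    intro n
    rcases eq_or_ne (w n) 0 with hwn | hwn
    · simp [hwn, Set.indicator, hS]
    · rw [Set.indicator_of_mem (by exact hwn)]
      apply Real.rpow_le_rpow (norm_nonneg _) _ (by norm_num)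
      calc ‖w n * f (σ n)‖ = ‖w n‖ * ‖f (σ n)‖ := norm_mul _ _
        _ ≤ 1 * ‖f (σ n)‖ := by
            exact mul_le_mul_of_nonneg_right (hw n) (norm_nonneg _)
        _ = ‖f (σ n)‖ := one_mul _
  have hsum : Summable (fun n => ‖w n * f (σ n)‖ ^ (2:ℝ)) :=
    Summable.of_nonneg_of_le (fun n => Real.rpow_nonneg (norm_nonneg _) _) hle hindic
  refine ⟨hsum, ?_⟩
  calc ∑' n, ‖w n * f (σ n)‖ ^ (2:ℝ) ≤ ∑' n, S.indicator h n :=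
        hsum.tsum_le_tsum hle hindic
    _ = ∑' x : S, h (x : ℕ) := (tsum_subtype S h).symm
    _ ≤ ∑' m, ‖f m‖ ^ (2:ℝ) := by
        apply hsubty.tsum_le_tsum_of_inj (fun x : S => σ (x : ℕ)) hinjS
          (fun c _ => Real.rpow_nonneg (norm_nonneg _) _) (fun x => le_rfl) base


lemma diag_mem (hw : ∀ n, ‖w n‖ ≤ 1)
    (hinj : ∀ n m, w n ≠ 0 → w m ≠ 0 → σ n = σ m → n = m) (f : H) :
    Memℓp (fun n => w n * f (σ n)) (2 : ENNReal) :=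
  memℓp_gen (by
    rw [two_toReal]
    exact (diag_est w σ hw hinj f).1)

def diagCLM (hw : ∀ n, ‖w n‖ ≤ 1)
    (hinj : ∀ n m, w n ≠ 0 → w m ≠ 0 → σ n = σ m → n = m) : H →L[ℂ] H :=
  LinearMap.mkContinuous
    { toFun := fun f => (⟨fun n => w n * f (σ n), diag_mem w σ hw hinj f⟩ : H)
      map_add' := by
        intro f g
        apply lp.ext
        funext n
        simp only [lp.coeFn_add, Pi.add_apply]
        ring
      map_smul' := by
        intro a f
        apply lp.ext
        funext n
        simp only [lp.coeFn_smul, Pi.smul_apply, smul_eq_mul, RingHom.id_apply]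
        ring }
    1
    (by
      intro f
      rw [one_mul]
      apply lp.norm_le_of_tsum_le (p := 2) (by rw [two_toReal]; norm_num) (norm_nonneg f)
      rw [two_toReal]
      calc (∑' n, ‖w n * f (σ n)‖ ^ (2:ℝ)) ≤ ∑' n, ‖f n‖ ^ (2:ℝ) :=
            (diag_est w σ hw hinj f).2
        _ = ‖f‖ ^ (2:ℝ) := by
            have h2 := lp.norm_rpow_eq_tsum (p := 2) (E := fun _ : ℕ => ℂ)
              (by rw [two_toReal]; norm_num) f
            rw [two_toReal] at h2
            exact h2.symm)

lemma diagCLM_apply (hw : ∀ n, ‖w n‖ ≤ 1)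
    (hinj : ∀ n m, w n ≠ 0 → w m ≠ 0 → σ n = σ m → n = m) (f : H) (n : ℕ) :
    (diagCLM w σ hw hinj f) n = w n * f (σ n) := rfl

lemma diagCLM_norm_le (hw : ∀ n, ‖w n‖ ≤ 1)
    (hinj : ∀ n m, w n ≠ 0 → w m ≠ 0 → σ n = σ m → n = m) :
    ‖diagCLM w σ hw hinj‖ ≤ 1 :=
  LinearMap.mkContinuous_norm_le _ zero_le_one _

end Diag

section Main

variable {c : ℕ × ℕ → ℂ}

def wk (c : ℕ × ℕ → ℂ) (k : ℤ) : ℕ → ℂ :=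
  fun n => if 0 ≤ (n : ℤ) + k then c (n, ((n : ℤ) + k).toNat) else 0

def σk (k : ℤ) : ℕ → ℕ := fun n => ((n : ℤ) + k).toNat

lemma wk_norm (hc : IsPhaseMatrix c) (k : ℤ) (n : ℕ) : ‖wk c k n‖ ≤ 1 := by
  unfold wk
  split
  · exact abs_le_one hc _ _
  · simp

lemma σk_inj (c : ℕ × ℕ → ℂ) (k : ℤ) :
    ∀ n m, wk c k n ≠ 0 → wk c k m ≠ 0 → σk k n = σk k m → n = m := by
  intro n m hn hm hσ
  have h1 : 0 ≤ (n : ℤ) + k := by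
    by_contra h; exact hn (by simp [wk, if_neg h])
  have h2 : 0 ≤ (m : ℤ) + k := by
    by_contra h; exact hm (by simp [wk, if_neg h])
  unfold σk at hσ
  omega

def Vop (hc : IsPhaseMatrix c) (k : ℤ) : H →L[ℂ] H :=
  diagCLM (wk c k) (σk k) (wk_norm hc k) (σk_inj c k)

lemma Vop_apply (hc : IsPhaseMatrix c) (k : ℤ) (f : H) (n : ℕ) :
    (Vop hc k f) n = wk c k n * f (σk k n) := rfl

lemma Vop_norm_le (hc : IsPhaseMatrix c) (k : ℤ) : ‖Vop hc k‖ ≤ 1 :=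
  diagCLM_norm_le _ _ _ _

lemma inner_e (n : ℕ) (y : H) : @inner ℂ H _ (e n) y = y n := by
  rw [e, lp.inner_single_left]
  simp [RCLike.inner_apply]

lemma e_apply (m j : ℕ) : (e m) j = if j = m then 1 else 0 := by
  rw [e, lp.single_apply]
  split <;> simp_all

lemma eq_of_inner_e {y z : H} (h : ∀ n, @inner ℂ H _ (e n) y = @inner ℂ H _ (e n) z) :
    y = z := by
  apply lp.ext
  funext n
  have := h n
  rwa [inner_e, inner_e] at this

lemma dense_span_e : Dense (Submodule.span ℂ (Set.range e) : Set H) := by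
  rw [Submodule.dense_iff_topologicalClosure_eq_top]
  rw [Submodule.topologicalClosure_eq_top_iff]
  rw [Submodule.eq_bot_iff]
  intro y hy
  apply lp.ext
  funext n
  have h0 : @inner ℂ H _ (e n) y = 0 :=
    (Submodule.mem_orthogonal _ y).mp hy (e n) (Submodule.subset_span ⟨n, rfl⟩)
  rw [inner_e] at h0
  simpa using h0

lemma clm_ext_of_inner_e {C₁ C₂ : H →L[ℂ] H}
    (h : ∀ n m, @inner ℂ H _ (e n) (C₁ (e m)) = @inner ℂ H _ (e n) (C₂ (e m))) :
    C₁ = C₂ := by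
  apply ContinuousLinearMap.ext_on dense_span_e
  rintro _ ⟨m, rfl⟩
  exact eq_of_inner_e fun n => h n m

end Main

lemma geom_int {r : ℝ} (hr0 : 0 ≤ r) (hr1 : r < 1) :
    HasSum (fun k : ℤ => r ^ k.natAbs) ((1 - r)⁻¹ + r * (1 - r)⁻¹) := by
  have h1 : HasSum (fun n : ℕ => r ^ n) (1 - r)⁻¹ := hasSum_geometric_of_lt_one hr0 hr1
  have h1' : HasSum (fun n : ℕ => r ^ ((n : ℤ)).natAbs) ((1 - r)⁻¹) := by simpa using h1
  have h2 : HasSum (fun n : ℕ => r ^ ((-((n : ℤ) + 1)).natAbs)) (r * (1 - r)⁻¹) := by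
    have h := h1.mul_left r
    suffices he : (fun n : ℕ => r ^ ((-((n : ℤ) + 1)).natAbs)) = fun i => r * r ^ i by
      rw [he]; exact h
    funext n
    have hn : ((-((n : ℤ) + 1)).natAbs) = n + 1 := by omega
    rw [hn, pow_succ]
    ring
  exact HasSum.of_nat_of_neg_add_one h1' h2

theorem stmt16 (c : ℕ × ℕ → ℂ) (hc : IsPhaseMatrix c) (ε : ℝ) (hε : ε ∈ Set.Ioc (0 : ℝ) 1) :
    (∃! C : H →L[ℂ] H, ∀ n m : ℕ,
      @inner ℂ H _ (e n) (C (e m)) =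
        c (n, m) * (((1 - ε : ℝ) : ℂ)) ^ ((n : ℤ) - m).natAbs) ∧
    (∀ C : H →L[ℂ] H,
      (∀ n m : ℕ, @inner ℂ H _ (e n) (C (e m)) =
        c (n, m) * (((1 - ε : ℝ) : ℂ)) ^ ((n : ℤ) - m).natAbs) →
      ‖C‖ ≤ 2 / ε - 1) := by
  obtain ⟨hε0, hε1⟩ := hε
  set r : ℝ := 1 - ε with hrdef
  have hr0 : 0 ≤ r := by simp only [hrdef]; linarith
  have hr1 : r < 1 := by simp only [hrdef]; linarith
  set A : ℤ → (H →L[ℂ] H) := fun k => ((r ^ k.natAbs : ℝ) : ℂ) • Vop hc k with hAdef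
  have hAnorm : ∀ k, ‖A k‖ ≤ r ^ k.natAbs := by
    intro k
    have hk : A k = ((r ^ k.natAbs : ℝ) : ℂ) • Vop hc k := rfl
    rw [hk]
    refine (norm_smul_le ((r ^ k.natAbs : ℝ) : ℂ) (Vop hc k)).trans ?_
    rw [Complex.norm_real, Real.norm_eq_abs, abs_of_nonneg (pow_nonneg hr0 _)]
    calc r ^ k.natAbs * ‖Vop hc k‖ ≤ r ^ k.natAbs * 1 :=
          mul_le_mul_of_nonneg_left (Vop_norm_le hc k) (pow_nonneg hr0 _)
      _ = r ^ k.natAbs := mul_one _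
  have hgeom := geom_int hr0 hr1
  have hgval : (1 - r)⁻¹ + r * (1 - r)⁻¹ = 2 / ε - 1 := by
    simp only [hrdef, sub_sub_cancel]
    field_simp
    ring
  have hnormsum : Summable fun k => ‖A k‖ :=
    Summable.of_nonneg_of_le (fun k => norm_nonneg _) hAnorm hgeom.summable
  have hA : Summable A := Summable.of_norm hnormsum
  set C : H →L[ℂ] H := ∑' k, A k with hCdef
  have hnorm : ‖C‖ ≤ 2 / ε - 1 := by
    calc ‖C‖ ≤ ∑' k, ‖A k‖ := norm_tsum_le_tsum_norm hnormsum
      _ ≤ ∑' k : ℤ, r ^ k.natAbs := hnormsum.tsum_le_tsum hAnorm hgeom.summable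
      _ = 2 / ε - 1 := by rw [hgeom.tsum_eq, hgval]
  have hprop : ∀ n m : ℕ, @inner ℂ H _ (e n) (C (e m)) =
      c (n, m) * ((r : ℂ)) ^ ((n : ℤ) - m).natAbs := by
    intro n m
    have hsum : Summable fun k => A k (e m) := by
      have := (ContinuousLinearMap.apply ℂ H (e m)).summable hA
      simpa only [ContinuousLinearMap.apply_apply] using this
    have hCe : C (e m) = ∑' k, A k (e m) := by
      have := ContinuousLinearMap.map_tsum (ContinuousLinearMap.apply ℂ H (e m)) hA
      simpa only [ContinuousLinearMap.apply_apply] using this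
    have hterm : ∀ k : ℤ, @inner ℂ H _ (e n) (A k (e m)) =
        ((r ^ k.natAbs : ℝ) : ℂ) * (wk c k n * (e m) (σk k n)) := by
      intro k
      rw [hAdef]
      simp only [ContinuousLinearMap.smul_apply]
      rw [inner_smul_right, inner_e, Vop_apply]
    have hmt := ContinuousLinearMap.map_tsum (innerSL ℂ (e n)) hsum
    simp only [innerSL_apply_apply] at hmt
    rw [hCe, hmt]
    have hfe : (fun k : ℤ => @inner ℂ H _ (e n) (A k (e m))) =
        fun k => ((r ^ k.natAbs : ℝ) : ℂ) * (wk c k n * (e m) (σk k n)) := funext hterm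
    rw [hfe]
    rw [tsum_eq_single ((m : ℤ) - n) ?_]
    · have h0 : (0 : ℤ) ≤ (n : ℤ) + ((m : ℤ) - n) := by omega
      have hσ : σk ((m : ℤ) - n) n = m := by unfold σk; omega
      rw [wk, if_pos h0]
      rw [show (((n : ℤ) + ((m : ℤ) - n)).toNat) = m by omega]
      rw [hσ, e_apply, if_pos rfl]
      have hab : ((m : ℤ) - n).natAbs = ((n : ℤ) - m).natAbs := by omega
      rw [hab, Complex.ofReal_pow]
      ring
    · intro k hk
      by_cases h0 : (0 : ℤ) ≤ (n : ℤ) + k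
      · have hσ : σk k n ≠ m := by unfold σk; omega
        rw [e_apply, if_neg hσ]
        ring
      · rw [wk, if_neg h0]
        ring
  refine ⟨⟨C, hprop, fun C' hC' => clm_ext_of_inner_e fun n m => by
      rw [hC' n m, hprop n m]⟩, fun C' hC' => ?_⟩
  have : C' = C := clm_ext_of_inner_e fun n m => by rw [hC' n m, hprop n m]
  rw [this]
  exact hnorm
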